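/- Uniform spectral gap in the Dirichlet and Robin regimes: there exist λ > 0 and ε₀ ∈ (0,1) such that for all ε ∈ (0,ε₀) and all β ≤ 1: λ₀^{ε,β} ≥ λ₀^{ε,1} ≥ λ. -/

import Mathlib

open scoped Classical MeasureTheory
open Filter MeasureTheory Set

noncomputable section

def IsLipschitzDomain (d : ℕ) (Ω : Set (EuclideanSpace ℝ (Fin d))) : Prop :=
  IsOpen Ω ∧ IsConnected Ω ∧ Bornology.IsBounded Ω ∧
    ∀ p ∈ frontier Ω, ∃ U ∈ nhds p,
      ∃ (φ : EuclideanSpace ℝ (Fin d) ≃ᵢ EuclideanSpace ℝ (Fin d)) (j : Fin d)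
        (L : NNReal) (g : (Fin d → ℝ) → ℝ),
        LipschitzWith L g ∧
          ∀ x ∈ U, (x ∈ Ω ↔ g (fun i => if i = j then 0 else φ x i) < φ x j)

def latticePts (d : ℕ) (ε : ℝ) : Set (EuclideanSpace ℝ (Fin d)) :=
  {x | ∀ i, ∃ n : ℤ, x i = n * ε}

def gridSet (d : ℕ) (ε : ℝ) : Set (EuclideanSpace ℝ (Fin d)) :=
  ⋃ x ∈ latticePts d ε, ⋃ y ∈ latticePts d ε, ⋃ (_ : dist x y = ε), segment ℝ x y

def discDomain {d : ℕ} (Ω : Set (EuclideanSpace ℝ (Fin d))) (ε : ℝ) :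
    Set (EuclideanSpace ℝ (Fin d)) :=
  connectedComponentIn (Ω ∩ gridSet d ε) 0 ∩ latticePts d ε

def innerBdry {d : ℕ} (Ω : Set (EuclideanSpace ℝ (Fin d))) (ε : ℝ) :
    Set (EuclideanSpace ℝ (Fin d)) :=
  {x ∈ discDomain Ω ε | ({y ∈ discDomain Ω ε | dist x y = ε}).ncard < 2 * d}

/-- The data of discrete outer boundaries `∂_eΩ_ε`, absorption kernels `q_ε` and
boundary weights `α_ε`, together with all standing assumptions on them. -/
structure BoundarySetup (d : ℕ) (Ω : Set (EuclideanSpace ℝ (Fin d))) : Type where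
  extBdry : ℝ → Set (EuclideanSpace ℝ (Fin d))
  q : ℝ → EuclideanSpace ℝ (Fin d) → EuclideanSpace ℝ (Fin d) → ℝ
  α : ℝ → EuclideanSpace ℝ (Fin d) → ℝ
  C₀ : ℝ
  extBdry_finite : ∀ ε ∈ Set.Ioo (0:ℝ) 1, (extBdry ε).Finite
  extBdry_disj : ∀ ε ∈ Set.Ioo (0:ℝ) 1, extBdry ε ⊆ Ωᶜ
  q_nonneg : ∀ ε ∈ Set.Ioo (0:ℝ) 1, ∀ x ∈ innerBdry Ω ε, ∀ z, 0 ≤ q ε x z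
  q_support : ∀ ε ∈ Set.Ioo (0:ℝ) 1, ∀ x ∈ innerBdry Ω ε, ∀ z ∉ extBdry ε, q ε x z = 0
  q_prob : ∀ ε ∈ Set.Ioo (0:ℝ) 1, ∀ x ∈ innerBdry Ω ε, ∑ᶠ z ∈ extBdry ε, q ε x z = 1
  q_close : ∀ δ > (0:ℝ), ∃ ε₀ > (0:ℝ), ∀ ε ∈ Set.Ioo (0:ℝ) 1, ε < ε₀ →
      ∀ x ∈ innerBdry Ω ε, (∑ᶠ z ∈ extBdry ε, q ε x z * dist z x) < δ
  one_le_C₀ : 1 ≤ C₀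
  α_bounds : ∀ ε ∈ Set.Ioo (0:ℝ) 1, ∀ x ∈ innerBdry Ω ε, C₀⁻¹ ≤ α ε x ∧ α ε x ≤ C₀
  α_weak : ∀ F : Set (EuclideanSpace ℝ (Fin d) → ℝ),
      (∃ M : ℝ, ∀ f ∈ F, ∀ x, |f x| ≤ M) →
      UniformEquicontinuous (fun f : F => (f : EuclideanSpace ℝ (Fin d) → ℝ)) →
      ∀ δ > (0:ℝ), ∃ ε₀ > (0:ℝ), ∀ ε ∈ Set.Ioo (0:ℝ) 1, ε < ε₀ → ∀ f ∈ F,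
        |ε ^ ((d:ℝ) - 1) * ∑ᶠ x ∈ innerBdry Ω ε, α ε x * f x
          - ∫ x in frontier Ω, f x ∂(μH[(d:ℝ) - 1])| < δ

variable {d : ℕ} {Ω : Set (EuclideanSpace ℝ (Fin d))}

/-- The generator `A^{ε,β}` of the random walk, with boundary-rate coefficient `κ`
(`κ = ε^{β-2}` for `β ∈ ℝ`, and `κ = 0` for `β = ∞`). -/
def rwGen (S : BoundarySetup d Ω) (ε κ : ℝ) (f : EuclideanSpace ℝ (Fin d) → ℝ) :
    EuclideanSpace ℝ (Fin d) → ℝ := fun x =>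
  if x ∈ discDomain Ω ε then
    ε ^ (-2 : ℝ) * (∑ᶠ y ∈ {y ∈ discDomain Ω ε | dist x y = ε}, (f y - f x))
      + (if x ∈ innerBdry Ω ε then
          κ * ∑ᶠ z ∈ S.extBdry ε, S.α ε x * S.q ε x z * (f z - f x)
        else 0)
  else 0

/-- The semigroup `P^{ε,β}_t = exp(t A^{ε,β})`, defined pointwise by the exponential series. -/
def rwSemigroup (S : BoundarySetup d Ω) (ε κ t : ℝ)
    (f : EuclideanSpace ℝ (Fin d) → ℝ) : EuclideanSpace ℝ (Fin d) → ℝ := fun x =>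
  ∑' n : ℕ, (t ^ n / (n.factorial : ℝ)) * ((rwGen S ε κ)^[n] f x)

/-- The restriction operator `Π_ε`, extending by `0` outside `Ω_ε`. -/
def projDisc {d : ℕ} (Ω : Set (EuclideanSpace ℝ (Fin d))) (ε : ℝ)
    (f : EuclideanSpace ℝ (Fin d) → ℝ) : EuclideanSpace ℝ (Fin d) → ℝ := fun x =>
  if x ∈ discDomain Ω ε then f x else 0

/-- The surface average `⟨ϑ⟩_{∂Ω}` with respect to the `(d-1)`-dimensional Hausdorff
measure on `∂Ω`. -/
def surfAvg (d : ℕ) (Ω : Set (EuclideanSpace ℝ (Fin d)))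
    (ϑ : EuclideanSpace ℝ (Fin d) → ℝ) : ℝ :=
  ⨍ x in frontier Ω, ϑ x ∂(μH[(d:ℝ) - 1])

/-- The Dirichlet form `E^{ε,β}`. -/
def dirForm (S : BoundarySetup d Ω) (ε β : ℝ) (f : EuclideanSpace ℝ (Fin d) → ℝ) : ℝ :=
  ε ^ d / 2 * ∑ᶠ x ∈ discDomain Ω ε, ∑ᶠ y ∈ {y ∈ discDomain Ω ε | dist x y = ε},
      ε ^ (-2 : ℝ) * (f y - f x) ^ 2
    + ε ^ (β - 1) * (ε ^ ((d:ℝ) - 1) * ∑ᶠ x ∈ innerBdry Ω ε, S.α ε x * f x ^ 2)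

/-- The smallest eigenvalue `λ₀^{ε,β}` of minus the generator, i.e. the minimum of the
Dirichlet form over `L²(Ω_ε)`-normalized functions. -/
def lam0 (S : BoundarySetup d Ω) (ε β : ℝ) : ℝ :=
  sInf {r : ℝ | ∃ f : EuclideanSpace ℝ (Fin d) → ℝ,
    ε ^ d * (∑ᶠ x ∈ discDomain Ω ε, f x ^ 2) = 1 ∧ dirForm S ε β f = r}

/-! A discrete Friedrichs inequality. Walk from a site `x` of `Ω_ε` in a lattice direction
`w = ε e_i`. As `Ω ⊆ B(0, R)`, the walk leaves `Ω_ε` within `N ≤ 3R/ε` steps, and the last site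
before leaving lacks its `w`-neighbour, so it lies on `∂Ω_ε`. Writing `f x` as the value there
minus a telescoping sum of increments, Cauchy–Schwarz gives
`Σ f² ≤ 2N Σ_{∂Ω_ε} f² + 2N² Σ_{x ∼ y} (f y - f x)²`, and multiplying by `ε^d` turns this into
`ε^d Σ f² ≤ (6 R C₀ + 36 R²) E^{ε,1}(f)`. Since `ε^{β-1}` decreases in `β` for `ε < 1`,
`λ₀^{ε,β} ≥ λ₀^{ε,1}`. -/

theorem sq_le_two_mul_sq_add_two_mul_sum_sq_sub (a : ℕ → ℝ) (k : ℕ) :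
    a 0 ^ 2 ≤ 2 * a k ^ 2 + 2 * k * ∑ j ∈ Finset.range k, (a (j + 1) - a j) ^ 2 := by
  have htel : a 0 = a k - ∑ j ∈ Finset.range k, (a (j + 1) - a j) := by
    rw [Finset.sum_range_sub]; ring
  have hCS := sq_sum_le_card_mul_sum_sq (s := Finset.range k) (f := fun j => a (j + 1) - a j)
  rw [Finset.card_range] at hCS
  rw [htel]
  nlinarith [sq_nonneg (a k + ∑ j ∈ Finset.range k, (a (j + 1) - a j))]

section Friedrichs

variable {G : Type*} [AddRightCancelMonoid G]

theorem exists_last_mem_add_nsmul {D : Finset G} {w : G} {N : ℕ}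
    (hN : ∀ x ∈ D, x + N • w ∉ D) {x : G} (hx : x ∈ D) :
    ∃ k < N, (∀ j ≤ k, x + j • w ∈ D) ∧ x + (k + 1) • w ∉ D := by
  have hexit : ∃ n, x + n • w ∉ D := ⟨N, hN x hx⟩
  have hpos : Nat.find hexit ≠ 0 := fun h => by
    have := Nat.find_spec hexit
    rw [h, zero_smul, add_zero] at this
    exact this hx
  refine ⟨Nat.find hexit - 1, ?_, fun j hj => ?_, ?_⟩
  · have := Nat.find_min' hexit (hN x hx); omega
  · exact not_not.mp (Nat.find_min hexit (by omega))
  · rw [Nat.sub_add_cancel (Nat.one_le_iff_ne_zero.mpr hpos)]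
    exact Nat.find_spec hexit

theorem sum_sum_add_nsmul_le (D T : Finset G) (w : G) (N : ℕ) (J : G → Finset ℕ)
    (hJ : ∀ x ∈ D, ∀ j ∈ J x, j < N ∧ x + j • w ∈ T) {h : G → ℝ} (hh : ∀ y ∈ T, 0 ≤ h y) :
    ∑ x ∈ D, ∑ j ∈ J x, h (x + j • w) ≤ N * ∑ y ∈ T, h y := by
  let e : (Σ _ : G, ℕ) → G × ℕ := fun p => (p.1 + p.2 • w, p.2)
  have he : Set.InjOn e (D.sigma J) := by
    rintro ⟨x, j⟩ - ⟨y, i⟩ - hxy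
    simp only [e, Prod.mk.injEq] at hxy
    obtain ⟨hxy, rfl⟩ := hxy
    rw [add_right_cancel hxy]
  have himage : (D.sigma J).image e ⊆ T ×ˢ Finset.range N := by
    simp only [Finset.subset_iff, Finset.mem_image, Finset.mem_sigma, Finset.mem_product,
      Finset.mem_range]
    rintro _ ⟨⟨x, j⟩, ⟨hx, hj⟩, rfl⟩
    exact ⟨(hJ x hx j hj).2, (hJ x hx j hj).1⟩
  calc ∑ x ∈ D, ∑ j ∈ J x, h (x + j • w) = ∑ q ∈ (D.sigma J).image e, h q.1 := by
        rw [Finset.sum_image he, Finset.sum_sigma']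
    _ ≤ ∑ q ∈ T ×ˢ Finset.range N, h q.1 :=
        Finset.sum_le_sum_of_subset_of_nonneg himage fun q hq _ =>
          hh q.1 (Finset.mem_product.mp hq).1
    _ = N * ∑ y ∈ T, h y := by
        rw [Finset.sum_product, Finset.mul_sum]
        simp [mul_comm]

theorem sum_sq_le_of_add_nsmul_notMem {D : Finset G} {w : G} {N : ℕ}
    (hN : ∀ x ∈ D, x + N • w ∉ D) (f : G → ℝ) :
    ∑ x ∈ D, f x ^ 2 ≤ 2 * N * ∑ y ∈ D with y + w ∉ D, f y ^ 2
      + 2 * N ^ 2 * ∑ y ∈ D with y + w ∈ D, (f (y + w) - f y) ^ 2 := by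
  choose! k hkN hkD hkexit using fun x (hx : x ∈ D) => exists_last_mem_add_nsmul hN hx
  have hpoint : ∀ x ∈ D, f x ^ 2 ≤ 2 * ∑ j ∈ {k x}, f (x + j • w) ^ 2
      + 2 * N * ∑ j ∈ Finset.range (k x), (f (x + j • w + w) - f (x + j • w)) ^ 2 := by
    intro x hx
    have := sq_le_two_mul_sq_add_two_mul_sum_sq_sub (fun j => f (x + j • w)) (k x)
    simp only [zero_smul, add_zero, succ_nsmul, ← add_assoc] at this
    rw [Finset.sum_singleton]
    exact this.trans (by gcongr; exact (hkN x hx).le)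
  have hboundary := sum_sum_add_nsmul_le D {y ∈ D | y + w ∉ D} w N (fun x => {k x})
    (h := fun y => f y ^ 2) (by
      intro x hx j hj
      rw [Finset.mem_singleton] at hj
      subst hj
      have hk := hkexit x hx
      rw [succ_nsmul, ← add_assoc] at hk
      simpa using ⟨hkN x hx, hkD x hx _ le_rfl, hk⟩)
    fun _ _ => sq_nonneg _
  have hinterior := sum_sum_add_nsmul_le D {y ∈ D | y + w ∈ D} w N
    (fun x => Finset.range (k x)) (h := fun y => (f (y + w) - f y) ^ 2) (by
      intro x hx j hj
      rw [Finset.mem_range] at hj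
      have hj' := hkD x hx (j + 1) hj
      rw [succ_nsmul, ← add_assoc] at hj'
      simpa using ⟨(hj.trans (hkN x hx)), hkD x hx j hj.le, hj'⟩)
    fun _ _ => sq_nonneg _
  calc ∑ x ∈ D, f x ^ 2 ≤ ∑ x ∈ D, (2 * ∑ j ∈ {k x}, f (x + j • w) ^ 2
        + 2 * N * ∑ j ∈ Finset.range (k x), (f (x + j • w + w) - f (x + j • w)) ^ 2) :=
        Finset.sum_le_sum hpoint
    _ = 2 * ∑ x ∈ D, ∑ j ∈ {k x}, f (x + j • w) ^ 2
        + 2 * N * ∑ x ∈ D, ∑ j ∈ Finset.range (k x),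
          (f (x + j • w + w) - f (x + j • w)) ^ 2 := by
        rw [Finset.sum_add_distrib, Finset.mul_sum, Finset.mul_sum]
    _ ≤ 2 * (N * ∑ y ∈ D with y + w ∉ D, f y ^ 2)
        + 2 * N * (N * ∑ y ∈ D with y + w ∈ D, (f (y + w) - f y) ^ 2) := by
        gcongr
    _ = _ := by ring

end Friedrichs

theorem exists_nat_two_mul_le_mul_le_three_mul {ε R : ℝ} (hε : 0 < ε) (hεR : ε ≤ R) :
    ∃ N : ℕ, 2 * R ≤ N * ε ∧ N * ε ≤ 3 * R := by
  have h2R : 0 ≤ 2 * R / ε := div_nonneg (by linarith) hε.le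
  refine ⟨⌈2 * R / ε⌉₊, (div_le_iff₀ hε).mp (Nat.le_ceil _), ?_⟩
  have := (mul_lt_mul_of_pos_right (Nat.ceil_lt_add_one h2R) hε).le
  rw [add_mul, div_mul_cancel₀ _ hε.ne'] at this
  linarith

theorem add_nsmul_notMem_ball {E : Type*} [NormedAddCommGroup E] [NormedSpace ℝ E]
    {R : ℝ} {x w : E} {N : ℕ} (hx : x ∈ Metric.ball 0 R) (hN : 2 * R ≤ N * ‖w‖) :
    x + N • w ∉ Metric.ball 0 R := by
  rw [mem_ball_zero_iff] at hx ⊢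
  intro hxw
  have := norm_sub_le (x + N • w) x
  rw [add_sub_cancel_left, RCLike.norm_nsmul ℝ, nsmul_eq_mul] at this
  linarith

theorem Int.exists_eq_one_or_neg_one_of_sum_sq_eq_one {ι : Type*} [Fintype ι] (m : ι → ℤ)
    (h : ∑ i, m i ^ 2 = 1) : ∃ i, (m i = 1 ∨ m i = -1) ∧ ∀ j ≠ i, m j = 0 := by
  obtain ⟨i, hi⟩ : ∃ i, m i ≠ 0 := by
    by_contra! h0
    simp [h0] at h
  have hsplit := Finset.add_sum_erase Finset.univ (fun j => m j ^ 2) (Finset.mem_univ i)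
  have hrest : 0 ≤ ∑ j ∈ Finset.univ.erase i, m j ^ 2 :=
    Finset.sum_nonneg fun j _ => sq_nonneg _
  have hmi : 0 < m i ^ 2 := by positivity
  refine ⟨i, sq_eq_one_iff.mp (by omega), fun j hj => pow_eq_zero_iff two_ne_zero |>.mp ?_⟩
  exact (Finset.sum_eq_zero_iff_of_nonneg fun j _ => sq_nonneg (m j)).mp (by omega) j
    (Finset.mem_erase.mpr ⟨hj, Finset.mem_univ j⟩)

theorem Bornology.IsBounded.finite_inter_latticePts {d : ℕ}
    {s : Set (EuclideanSpace ℝ (Fin d))} (hs : Bornology.IsBounded s) {ε : ℝ} (hε : 0 < ε) :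
    (s ∩ latticePts d ε).Finite := by
  obtain ⟨C, hC⟩ := hs.exists_norm_le
  refine (((isCompact_closedBall (0 : Fin d → ℤ) (C / ε)).finite_of_discrete).image
    fun n => WithLp.toLp 2 fun j => (n j : ℝ) * ε).subset ?_
  rintro x ⟨hxs, hx⟩
  choose n hn using hx
  have hcoord : ∀ j, |(n j : ℝ)| * ε ≤ C := fun j => by
    calc |(n j : ℝ)| * ε = ‖x j‖ := by rw [hn j, Real.norm_eq_abs, abs_mul, abs_of_pos hε]
      _ ≤ ‖x‖ := PiLp.norm_apply_le x j
      _ ≤ C := hC x hxs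
  refine ⟨n, ?_, by ext j; simp [hn j]⟩
  rw [mem_closedBall_zero_iff, pi_norm_le_iff_of_nonneg
    (div_nonneg ((norm_nonneg x).trans (hC x hxs)) hε.le)]
  intro j
  rw [Int.norm_eq_abs, le_div_iff₀ hε]
  exact hcoord j

theorem eq_add_smul_single_of_dist_eq {d : ℕ} {ε : ℝ} (hε : 0 < ε)
    {x y : EuclideanSpace ℝ (Fin d)} (hx : x ∈ latticePts d ε) (hy : y ∈ latticePts d ε)
    (hxy : dist x y = ε) :
    ∃ i : Fin d, ∃ s ∈ ({1, -1} : Finset ℝ), y = x + (s * ε) • EuclideanSpace.single i 1 := by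
  choose a ha using hx
  choose b hb using hy
  have hsum : ∑ j, (b j - a j) ^ 2 = 1 := by
    have hdist : ∑ j, dist (x j) (y j) ^ 2 = ε ^ 2 := by
      rw [← hxy, EuclideanSpace.dist_eq, Real.sq_sqrt (by positivity)]
    have hscaled : ∑ j, dist (x j) (y j) ^ 2 = (∑ j, ((b j - a j : ℤ) : ℝ) ^ 2) * ε ^ 2 := by
      rw [Finset.sum_mul]
      refine Finset.sum_congr rfl fun j _ => ?_
      rw [Real.dist_eq, sq_abs, ha j, hb j]
      push_cast
      ring
    exact_mod_cast mul_right_cancel₀ (pow_ne_zero 2 hε.ne')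
      (hscaled.symm.trans (hdist.trans (one_mul _).symm))
  obtain ⟨i, hi, hzero⟩ := Int.exists_eq_one_or_neg_one_of_sum_sq_eq_one _ hsum
  refine ⟨i, ((b i - a i : ℤ) : ℝ), by rcases hi with h | h <;> simp [h], ?_⟩
  ext j
  by_cases hj : j = i
  · subst hj
    simp [ha, hb]
    ring
  · have hab : (b j : ℝ) = a j := by exact_mod_cast sub_eq_zero.mp (hzero j hj)
    simp [hj, ha, hb, hab]

theorem mem_gridSet_of_mem_latticePts {d : ℕ} {ε : ℝ} (hε : 0 ≤ ε) {x : EuclideanSpace ℝ (Fin d)}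
    (hx : x ∈ latticePts d ε) (i : Fin d) : x ∈ gridSet d ε := by
  have hy : x + ε • EuclideanSpace.single i 1 ∈ latticePts d ε := fun j => by
    obtain ⟨n, hn⟩ := hx j
    refine ⟨n + if j = i then 1 else 0, ?_⟩
    by_cases hj : j = i
    · subst hj
      simp [hn]
      ring
    · simp [hj, hn]
  have hdist : dist x (x + ε • EuclideanSpace.single i 1) = ε := by
    rw [dist_self_add_right, norm_smul, PiLp.norm_single, norm_one, mul_one,
      Real.norm_of_nonneg hε]
  exact mem_iUnion₂.mpr ⟨x, hx, mem_iUnion₂.mpr ⟨_, hy,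
    mem_iUnion.mpr ⟨hdist, left_mem_segment ℝ _ _⟩⟩⟩

theorem zero_mem_discDomain (h0 : (0 : EuclideanSpace ℝ (Fin d)) ∈ Ω) {ε : ℝ} (hε : 0 ≤ ε)
    (i : Fin d) : 0 ∈ discDomain Ω ε := by
  have h0lat : (0 : EuclideanSpace ℝ (Fin d)) ∈ latticePts d ε := fun _ => ⟨0, by simp⟩
  exact ⟨mem_connectedComponentIn ⟨h0, mem_gridSet_of_mem_latticePts hε h0lat i⟩, h0lat⟩

theorem discDomain_subset (ε : ℝ) : discDomain Ω ε ⊆ Ω ∩ latticePts d ε :=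
  fun _ hx => ⟨(connectedComponentIn_subset _ _ hx.1).1, hx.2⟩

theorem discDomain_finite (hΩ : Bornology.IsBounded Ω) {ε : ℝ} (hε : 0 < ε) :
    (discDomain Ω ε).Finite :=
  (hΩ.finite_inter_latticePts hε).subset (discDomain_subset ε)

theorem mem_innerBdry_of_add_notMem {ε : ℝ} (hε : 0 < ε) {x : EuclideanSpace ℝ (Fin d)}
    (hx : x ∈ discDomain Ω ε) {i : Fin d}
    (hxi : x + ε • EuclideanSpace.single i 1 ∉ discDomain Ω ε) : x ∈ innerBdry Ω ε := by
  let T : Finset (EuclideanSpace ℝ (Fin d)) := (Finset.univ ×ˢ ({1, -1} : Finset ℝ)).image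
    fun p => x + (p.2 * ε) • EuclideanSpace.single p.1 1
  have hT : T.card ≤ 2 * d := Finset.card_image_le.trans (by
    rw [Finset.card_product, Finset.card_univ, Fintype.card_fin, mul_comm]
    exact Nat.mul_le_mul_right d Finset.card_le_two)
  have hmem : x + ε • EuclideanSpace.single i 1 ∈ T :=
    Finset.mem_image.mpr ⟨(i, 1), by simp, by simp⟩
  have hsub : {y ∈ discDomain Ω ε | dist x y = ε} ⊆
      ↑(T.erase (x + ε • EuclideanSpace.single i 1)) := by
    rintro y ⟨hy, hxy⟩
    obtain ⟨j, s, hs, rfl⟩ :=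
      eq_add_smul_single_of_dist_eq hε (discDomain_subset ε hx).2 (discDomain_subset ε hy).2 hxy
    refine Finset.mem_erase.mpr ⟨fun h => hxi (h ▸ hy), Finset.mem_image.mpr ⟨(j, s), ?_, rfl⟩⟩
    simpa using hs
  refine ⟨hx, ?_⟩
  calc {y ∈ discDomain Ω ε | dist x y = ε}.ncard
      ≤ (T.erase (x + ε • EuclideanSpace.single i 1)).card := by
        rw [← Set.ncard_coe_finset]
        exact Set.ncard_le_ncard hsub (Finset.finite_toSet _)
    _ < 2 * d := by
        rw [Finset.card_erase_of_mem hmem]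
        have := Finset.card_pos.mpr ⟨_, hmem⟩
        omega

namespace BoundarySetup

variable (S : BoundarySetup d Ω) {ε : ℝ}

theorem C₀_pos : 0 < S.C₀ := zero_lt_one.trans_le S.one_le_C₀

theorem α_nonneg (hε : ε ∈ Ioo 0 1) {x : EuclideanSpace ℝ (Fin d)} (hx : x ∈ innerBdry Ω ε) :
    0 ≤ S.α ε x :=
  (inv_nonneg.mpr S.C₀_pos.le).trans (S.α_bounds ε hε x hx).1

theorem one_le_C₀_mul_α (hε : ε ∈ Ioo 0 1) {x : EuclideanSpace ℝ (Fin d)}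
    (hx : x ∈ innerBdry Ω ε) : 1 ≤ S.C₀ * S.α ε x := by
  have := mul_le_mul_of_nonneg_left (S.α_bounds ε hε x hx).1 S.C₀_pos.le
  rwa [mul_inv_cancel₀ S.C₀_pos.ne'] at this

end BoundarySetup

theorem sum_sq_sub_le_finsum_neighbours {ε : ℝ} (hfin : (discDomain Ω ε).Finite)
    {w : EuclideanSpace ℝ (Fin d)} (hw : ‖w‖ = ε) (f : EuclideanSpace ℝ (Fin d) → ℝ) :
    ∑ y ∈ hfin.toFinset with y + w ∈ discDomain Ω ε, (f (y + w) - f y) ^ 2 ≤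
      ∑ᶠ x ∈ discDomain Ω ε, ∑ᶠ y ∈ {y ∈ discDomain Ω ε | dist x y = ε}, (f y - f x) ^ 2 := by
  rw [finsum_mem_eq_finite_toFinset_sum _ hfin]
  refine (Finset.sum_le_sum fun y hy => ?_).trans
    (Finset.sum_le_sum_of_subset_of_nonneg (Finset.filter_subset _ _) fun x _ _ =>
      finsum_nonneg fun _ => finsum_nonneg fun _ => sq_nonneg _)
  have hnbr : {z ∈ discDomain Ω ε | dist y z = ε}.Finite := hfin.subset fun z hz => hz.1
  rw [finsum_mem_eq_finite_toFinset_sum _ hnbr]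
  exact Finset.single_le_sum (f := fun z => (f z - f y) ^ 2) (fun _ _ => sq_nonneg _)
    (hnbr.mem_toFinset.mpr ⟨(Finset.mem_filter.mp hy).2, by rw [dist_self_add_right, hw]⟩)

section DirichletForm

variable (S : BoundarySetup d Ω) {ε : ℝ}

theorem finsum_innerBdry_nonneg (hε : ε ∈ Ioo 0 1) (f : EuclideanSpace ℝ (Fin d) → ℝ) :
    0 ≤ ∑ᶠ x ∈ innerBdry Ω ε, S.α ε x * f x ^ 2 :=
  finsum_nonneg fun _ => finsum_nonneg fun hx => mul_nonneg (S.α_nonneg hε hx) (sq_nonneg _)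

theorem dirForm_nonneg (hε : ε ∈ Ioo 0 1) (β : ℝ) (f : EuclideanSpace ℝ (Fin d) → ℝ) :
    0 ≤ dirForm S ε β f := by
  have hgrad : 0 ≤ ∑ᶠ x ∈ discDomain Ω ε, ∑ᶠ y ∈ {y ∈ discDomain Ω ε | dist x y = ε},
      ε ^ (-2 : ℝ) * (f y - f x) ^ 2 :=
    finsum_nonneg fun _ => finsum_nonneg fun _ => finsum_nonneg fun _ => finsum_nonneg fun _ =>
      mul_nonneg (Real.rpow_nonneg hε.1.le _) (sq_nonneg _)
  exact add_nonneg (mul_nonneg (by have := hε.1; positivity) hgrad)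
    (mul_nonneg (Real.rpow_nonneg hε.1.le _)
      (mul_nonneg (Real.rpow_nonneg hε.1.le _) (finsum_innerBdry_nonneg S hε f)))

theorem dirForm_anti (hε : ε ∈ Ioo 0 1) {β β' : ℝ} (hβ : β ≤ β')
    (f : EuclideanSpace ℝ (Fin d) → ℝ) : dirForm S ε β' f ≤ dirForm S ε β f := by
  unfold dirForm
  refine add_le_add_right (mul_le_mul_of_nonneg_right ?_ ?_) _
  · exact Real.rpow_le_rpow_of_exponent_ge hε.1 hε.2.le (by linarith)
  · exact mul_nonneg (Real.rpow_nonneg hε.1.le _) (finsum_innerBdry_nonneg S hε f)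

theorem exists_normalized_discDomain (hε : 0 < ε) (hfin : (discDomain Ω ε).Finite)
    (hne : (discDomain Ω ε).Nonempty) :
    ∃ f : EuclideanSpace ℝ (Fin d) → ℝ, ε ^ d * ∑ᶠ x ∈ discDomain Ω ε, f x ^ 2 = 1 := by
  obtain ⟨a, ha⟩ := hne
  refine ⟨fun x => if x = a then (√(ε ^ d))⁻¹ else 0, ?_⟩
  rw [finsum_mem_eq_finite_toFinset_sum _ hfin]
  simp only [ite_pow, ne_eq, OfNat.ofNat_ne_zero, not_false_eq_true, zero_pow,
    Finset.sum_ite_eq', hfin.mem_toFinset.mpr ha, if_true, inv_pow,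
    Real.sq_sqrt (by positivity : 0 ≤ ε ^ d)]
  exact mul_inv_cancel₀ (by positivity)

theorem lam0_anti (hε : ε ∈ Ioo 0 1) (hfin : (discDomain Ω ε).Finite)
    (hne : (discDomain Ω ε).Nonempty) {β β' : ℝ} (hβ : β ≤ β') :
    lam0 S ε β' ≤ lam0 S ε β := by
  obtain ⟨f₀, hf₀⟩ := exists_normalized_discDomain hε.1 hfin hne
  refine le_csInf ⟨_, f₀, hf₀, rfl⟩ ?_
  rintro _ ⟨f, hf, rfl⟩
  refine le_trans ?_ (dirForm_anti S hε hβ f)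
  refine csInf_le ⟨0, ?_⟩ ⟨f, hf, rfl⟩
  rintro _ ⟨g, -, rfl⟩
  exact dirForm_nonneg S hε β' g

theorem le_lam0 (hε : 0 < ε) (hfin : (discDomain Ω ε).Finite) (hne : (discDomain Ω ε).Nonempty)
    {β c : ℝ} (h : ∀ f : EuclideanSpace ℝ (Fin d) → ℝ,
      c * (ε ^ d * ∑ᶠ x ∈ discDomain Ω ε, f x ^ 2) ≤ dirForm S ε β f) :
    c ≤ lam0 S ε β := by
  obtain ⟨f₀, hf₀⟩ := exists_normalized_discDomain hε hfin hne
  refine le_csInf ⟨_, f₀, hf₀, rfl⟩ ?_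
  rintro _ ⟨f, hf, rfl⟩
  simpa [hf] using h f

theorem sum_sq_le_C₀_mul_finsum_innerBdry (hε : ε ∈ Ioo 0 1) (hfin : (discDomain Ω ε).Finite)
    (i : Fin d) (f : EuclideanSpace ℝ (Fin d) → ℝ) :
    ∑ y ∈ hfin.toFinset with y + ε • EuclideanSpace.single i 1 ∉ discDomain Ω ε, f y ^ 2 ≤
      S.C₀ * ∑ᶠ x ∈ innerBdry Ω ε, S.α ε x * f x ^ 2 := by
  have hbdry : (innerBdry Ω ε).Finite := hfin.subset fun x hx => hx.1
  rw [finsum_mem_eq_finite_toFinset_sum _ hbdry, Finset.mul_sum]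
  refine (Finset.sum_le_sum_of_subset_of_nonneg ?_ fun _ _ _ => sq_nonneg _).trans
    (Finset.sum_le_sum fun x hx => ?_)
  · intro x hx
    obtain ⟨hx, hxi⟩ := Finset.mem_filter.mp hx
    exact hbdry.mem_toFinset.mpr
      (mem_innerBdry_of_add_notMem hε.1 (hfin.mem_toFinset.mp hx) hxi)
  · rw [← mul_assoc]
    exact le_mul_of_one_le_left (sq_nonneg _) (S.one_le_C₀_mul_α hε (hbdry.mem_toFinset.mp hx))

theorem dirForm_one_eq (hε : 0 < ε) (f : EuclideanSpace ℝ (Fin d) → ℝ) :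
    dirForm S ε 1 f = ε ^ d / ε ^ 2 / 2 *
        ∑ᶠ x ∈ discDomain Ω ε, ∑ᶠ y ∈ {y ∈ discDomain Ω ε | dist x y = ε}, (f y - f x) ^ 2
      + ε ^ d / ε * ∑ᶠ x ∈ innerBdry Ω ε, S.α ε x * f x ^ 2 := by
  simp only [dirForm, ← mul_finsum_mem, sub_self, Real.rpow_zero, one_mul,
    Real.rpow_sub hε, Real.rpow_natCast, Real.rpow_one, Real.rpow_neg hε.le]
  norm_num
  ring

theorem sum_sq_le_mul_dirForm_one {R : ℝ} (hΩR : Ω ⊆ Metric.ball 0 R) (hε : ε ∈ Ioo 0 1)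
    (hεR : ε ≤ R) (i : Fin d) (f : EuclideanSpace ℝ (Fin d) → ℝ) :
    ε ^ d * ∑ᶠ x ∈ discDomain Ω ε, f x ^ 2 ≤ (6 * R * S.C₀ + 36 * R ^ 2) * dirForm S ε 1 f := by
  have hfin := discDomain_finite (Metric.isBounded_ball.subset hΩR) hε.1
  set w := ε • EuclideanSpace.single i (1 : ℝ)
  have hw : ‖w‖ = ε := by
    rw [norm_smul, PiLp.norm_single, norm_one, mul_one, Real.norm_of_nonneg hε.1.le]
  obtain ⟨N, hNε⟩ := exists_nat_two_mul_le_mul_le_three_mul hε.1 hεR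
  have hexit : ∀ x ∈ hfin.toFinset, x + N • w ∉ hfin.toFinset := fun x hx hxN =>
    add_nsmul_notMem_ball (hΩR (discDomain_subset ε (hfin.mem_toFinset.mp hx)).1)
      (hw ▸ hNε.1) (hΩR (discDomain_subset ε (hfin.mem_toFinset.mp hxN)).1)
  have hF := sum_sq_le_of_add_nsmul_notMem hexit f
  simp only [Set.Finite.mem_toFinset] at hF
  have hB := sum_sq_le_C₀_mul_finsum_innerBdry S hε hfin i f
  have hG := sum_sq_sub_le_finsum_neighbours hfin hw f
  rw [dirForm_one_eq S hε.1, finsum_mem_eq_finite_toFinset_sum _ hfin]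
  set Gr := ∑ᶠ x ∈ discDomain Ω ε, ∑ᶠ y ∈ {y ∈ discDomain Ω ε | dist x y = ε}, (f y - f x) ^ 2
  set Bd := ∑ᶠ x ∈ innerBdry Ω ε, S.α ε x * f x ^ 2
  have hGr : 0 ≤ Gr := (Finset.sum_nonneg fun _ _ => sq_nonneg _).trans hG
  have hBd : 0 ≤ Bd := finsum_innerBdry_nonneg S hε f
  have hC₀ := S.C₀_pos
  have hε₀ := hε.1
  calc ε ^ d * ∑ x ∈ hfin.toFinset, f x ^ 2
      ≤ ε ^ d * (2 * N * (S.C₀ * Bd) + 2 * N ^ 2 * Gr) := by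
        gcongr
        exact hF.trans (by gcongr)
    _ = 2 * (N * ε) * S.C₀ * (ε ^ d / ε * Bd) + 2 * (N * ε) ^ 2 * (ε ^ d / ε ^ 2 * Gr) := by
        field_simp
    _ ≤ 2 * (3 * R) * S.C₀ * (ε ^ d / ε * Bd) + 2 * (3 * R) ^ 2 * (ε ^ d / ε ^ 2 * Gr) := by
        gcongr 2 * ?_ * _ * _ + 2 * ?_ ^ 2 * _ <;> exact hNε.2
    _ ≤ (6 * R * S.C₀ + 36 * R ^ 2) * (ε ^ d / ε ^ 2 / 2 * Gr + ε ^ d / ε * Bd) := by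
        have hR : 0 ≤ R := hε₀.le.trans hεR
        rw [← sub_nonneg]
        ring_nf
        positivity

end DirichletForm

/-- Uniform spectral gap in the Dirichlet and Robin regimes:
for all small `ε` and all `β ≤ 1`, `λ₀^{ε,β} ≥ λ₀^{ε,1} ≥ λ` for some `λ > 0`. -/
theorem uniform_spectral_gap_dirichlet_robin
    (d : ℕ) (hd : 2 ≤ d) (Ω : Set (EuclideanSpace ℝ (Fin d)))
    (hΩ : IsLipschitzDomain d Ω) (h0 : (0 : EuclideanSpace ℝ (Fin d)) ∈ Ω)
    (S : BoundarySetup d Ω) :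
    ∃ lam > (0:ℝ), ∃ ε₀ ∈ Set.Ioo (0:ℝ) 1, ∀ ε ∈ Set.Ioo (0:ℝ) ε₀, ∀ β : ℝ, β ≤ 1 →
      lam0 S ε 1 ≤ lam0 S ε β ∧ lam ≤ lam0 S ε 1 := by
  obtain ⟨R, hR, hΩR⟩ := hΩ.2.2.1.subset_ball_lt 0 0
  have hC : 0 < 6 * R * S.C₀ + 36 * R ^ 2 := by have := S.C₀_pos; positivity
  let i : Fin d := ⟨0, by omega⟩
  refine ⟨(6 * R * S.C₀ + 36 * R ^ 2)⁻¹, inv_pos.mpr hC, min (1 / 2) R,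
    ⟨lt_min (by norm_num) hR, (min_le_left _ _).trans_lt (by norm_num)⟩, fun ε hε β hβ => ?_⟩
  have hε1 : ε ∈ Ioo 0 1 := ⟨hε.1, hε.2.trans_le (min_le_left _ _) |>.trans (by norm_num)⟩
  have hεR : ε ≤ R := (hε.2.trans_le (min_le_right _ _)).le
  have hfin := discDomain_finite hΩ.2.2.1 hε.1
  have hne : (discDomain Ω ε).Nonempty := ⟨0, zero_mem_discDomain h0 hε.1.le i⟩
  refine ⟨lam0_anti S hε1 hfin hne hβ, le_lam0 S hε.1 hfin hne fun f => ?_⟩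
  rw [inv_mul_le_iff₀ hC]
  exact sum_sq_le_mul_dirForm_one S hΩR hε1 hεR i f

end
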